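/- arXiv:2508.19890 — 3 statements merged into one kernel-verified Lean document; each statement's English description precedes it below -/
import Mathlib

section
/- Let n be a positive integer, Y a symmetric n×n real matrix, X an n×n real matrix, and χ: ℝⁿ → ℂ an arbitrary function. Define the transformed function (Φχ)(r) = exp(−(1/4)·rᵀY r) · χ(Xᵀ r). Then for all r_A, r_B ∈ ℝⁿ: (Φχ)((r_A + r_B)/√2) · (Φχ)((r_B − r_A)/√2) = exp(−(1/4)·r_AᵀY r_A) · exp(−(1/4)·r_BᵀY r_B) · χ(Xᵀ(r_A + r_B)/√2) · χ(Xᵀ(r_B − r_A)/√2). In other words, applying a (zero-displacement) Gaussian channel to both copies before the 50:50 beam splitter produces the same characteristic function as applying the same channel locally to both output modes after the beam splitter. -/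
/-! The Gaussian factor is `exp` of a quadratic form; by the parallelogram law the 50:50 beam
splitter preserves the sum of that form over the two modes, and `exp` turns this sum into the
product of the two factors. -/

open scoped Matrix

theorem Matrix.dotProduct_mulVec_add_add_sub {m R : Type*} [Fintype m] [CommRing R]
    (Y : Matrix m m R) (a b : m → R) :
    (a + b) ⬝ᵥ Y *ᵥ (a + b) + (b - a) ⬝ᵥ Y *ᵥ (b - a) = 2 * (a ⬝ᵥ Y *ᵥ a + b ⬝ᵥ Y *ᵥ b) := by
  simp only [Matrix.mulVec_add, Matrix.mulVec_sub, dotProduct_add, add_dotProduct,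
    dotProduct_sub, sub_dotProduct]
  ring

theorem Matrix.dotProduct_mulVec_beamSplitter {m R : Type*} [Fintype m] [CommRing R]
    (Y : Matrix m m R) {s : R} (hs : 2 * (s * s) = 1) (a b : m → R) :
    (s • (a + b)) ⬝ᵥ Y *ᵥ (s • (a + b)) + (s • (b - a)) ⬝ᵥ Y *ᵥ (s • (b - a)) =
      a ⬝ᵥ Y *ᵥ a + b ⬝ᵥ Y *ᵥ b := by
  simp only [Matrix.mulVec_smul, dotProduct_smul, smul_dotProduct, smul_eq_mul]
  rw [← mul_assoc, ← mul_assoc, ← mul_add, Y.dotProduct_mulVec_add_add_sub, ← mul_assoc,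
    mul_comm (s * s), hs, one_mul]

theorem Real.two_mul_inv_sqrt_two_mul_self : 2 * ((√2)⁻¹ * (√2)⁻¹) = 1 := by
  rw [← mul_inv, Real.mul_self_sqrt zero_le_two, mul_inv_cancel₀ two_ne_zero]

theorem gaussian_channel_commutes_with_beam_splitter_general
    (n : ℕ)
    (Y X : Matrix (Fin n) (Fin n) ℝ)
    (χ Φχ : (Fin n → ℝ) → ℂ)
    (hΦ : ∀ r, Φχ r = Complex.exp (-(1/4 : ℂ) * ((r ⬝ᵥ Y.mulVec r : ℝ) : ℂ))
        * χ (X.transpose.mulVec r)) :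
    ∀ rA rB : Fin n → ℝ,
      Φχ ((Real.sqrt 2)⁻¹ • (rA + rB)) * Φχ ((Real.sqrt 2)⁻¹ • (rB - rA)) =
        Complex.exp (-(1/4 : ℂ) * ((rA ⬝ᵥ Y.mulVec rA : ℝ) : ℂ))
        * Complex.exp (-(1/4 : ℂ) * ((rB ⬝ᵥ Y.mulVec rB : ℝ) : ℂ))
        * χ (X.transpose.mulVec ((Real.sqrt 2)⁻¹ • (rA + rB)))
        * χ (X.transpose.mulVec ((Real.sqrt 2)⁻¹ • (rB - rA))) := by
  intro rA rB
  have hq := Y.dotProduct_mulVec_beamSplitter Real.two_mul_inv_sqrt_two_mul_self rA rB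
  have hexp : Complex.exp (-(1/4 : ℂ) * (((√2)⁻¹ • (rA + rB)) ⬝ᵥ Y *ᵥ ((√2)⁻¹ • (rA + rB)) : ℝ))
      * Complex.exp (-(1/4 : ℂ) * (((√2)⁻¹ • (rB - rA)) ⬝ᵥ Y *ᵥ ((√2)⁻¹ • (rB - rA)) : ℝ)) =
      Complex.exp (-(1/4 : ℂ) * (rA ⬝ᵥ Y *ᵥ rA : ℝ))
      * Complex.exp (-(1/4 : ℂ) * (rB ⬝ᵥ Y *ᵥ rB : ℝ)) := by
    rw [← Complex.exp_add, ← Complex.exp_add, ← mul_add, ← mul_add, ← Complex.ofReal_add,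
      ← Complex.ofReal_add, hq]
  rw [hΦ, hΦ, ← hexp]
  ring

/-- A zero-displacement Gaussian channel, acting on characteristic
functions as `(Φχ)(r) = exp(−(1/4)·rᵀYr)·χ(Xᵀr)`, commutes with the 50:50 beam splitter:
applying it to both copies before the beam splitter equals applying it locally to both
outputs after the beam splitter. -/
theorem gaussian_channel_commutes_with_beam_splitter
    (n : ℕ) (hn : 0 < n)
    (Y X : Matrix (Fin n) (Fin n) ℝ) (hY : Y.IsSymm)
    (χ Φχ : (Fin n → ℝ) → ℂ)
    (hΦ : ∀ r, Φχ r = Complex.exp (-(1/4 : ℂ) * ((r ⬝ᵥ Y.mulVec r : ℝ) : ℂ))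
        * χ (X.transpose.mulVec r)) :
    ∀ rA rB : Fin n → ℝ,
      Φχ ((Real.sqrt 2)⁻¹ • (rA + rB)) * Φχ ((Real.sqrt 2)⁻¹ • (rB - rA)) =
        Complex.exp (-(1/4 : ℂ) * ((rA ⬝ᵥ Y.mulVec rA : ℝ) : ℂ))
        * Complex.exp (-(1/4 : ℂ) * ((rB ⬝ᵥ Y.mulVec rB : ℝ) : ℂ))
        * χ (X.transpose.mulVec ((Real.sqrt 2)⁻¹ • (rA + rB)))
        * χ (X.transpose.mulVec ((Real.sqrt 2)⁻¹ • (rB - rA))) :=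
  gaussian_channel_commutes_with_beam_splitter_general n Y X χ Φχ hΦ
end

section
/- Let x > 0 be a real number and define E_x: ℝ → ℝ by E_x(r) = (1/2)·(cosh(2r) − 1) + 18·x²·e^{−2r}. Then E_x attains its global minimum over ℝ at the unique point r* = (1/4)·log(72·x² + 1), and the minimum value is E_x(r*) = (1/2)·((36·x² + 1)/√(72·x² + 1) − 1) + 18·x²/√(72·x² + 1). -/
/-! With `t = e^{2r}` and `s = √(72x² + 1)` one has `E_x(r) = (t + s²/t)/4 − 1/2`, and
`t + s²/t = (t − s)²/t + 2s`. So `E_x(r) ≥ (s − 1)/2`, with equality exactly when `t = s`,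
i.e. at `r = (1/4) log s²`. -/

open Real

lemma add_sq_div_eq_sub_sq_div_add {t : ℝ} (ht : t ≠ 0) (s : ℝ) :
    t + s ^ 2 / t = (t - s) ^ 2 / t + 2 * s := by
  field_simp
  ring

lemma two_mul_le_add_sq_div {t : ℝ} (ht : 0 < t) (s : ℝ) : 2 * s ≤ t + s ^ 2 / t := by
  rw [add_sq_div_eq_sub_sq_div_add ht.ne']
  have : 0 ≤ (t - s) ^ 2 / t := by positivity
  linarith

lemma two_mul_lt_add_sq_div {t s : ℝ} (ht : 0 < t) (hts : t ≠ s) : 2 * s < t + s ^ 2 / t := by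
  rw [add_sq_div_eq_sub_sq_div_add ht.ne']
  have : 0 < (t - s) ^ 2 / t := div_pos (sq_pos_of_ne_zero (sub_ne_zero.mpr hts)) ht
  linarith

lemma half_cosh_sub_one_add_mul_exp_neg (c r : ℝ) :
    (1/2) * (cosh (2 * r) - 1) + c * exp (-(2 * r)) =
      (exp (2 * r) + (1 + 4 * c) / exp (2 * r)) / 4 - 1/2 := by
  rw [cosh_eq, exp_neg]
  field_simp
  ring

lemma exp_two_mul_quarter_log {a : ℝ} (ha : 0 < a) : exp (2 * ((1/4) * log a)) = √a := by
  rw [sqrt_eq_rpow, rpow_def_of_pos ha]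
  ring_nf

theorem cubic_phase_state_minimal_mean_photon_number_general
    (x : ℝ) (E : ℝ → ℝ)
    (hE : ∀ r, E r = (1/2) * (Real.cosh (2 * r) - 1) + 18 * x ^ 2 * Real.exp (-(2 * r)))
    (rstar : ℝ) (hrstar : rstar = (1/4) * Real.log (72 * x ^ 2 + 1)) :
    (∀ r, E rstar ≤ E r) ∧ (∀ r, r ≠ rstar → E rstar < E r) ∧
      E rstar = (1/2) * ((36 * x ^ 2 + 1) / Real.sqrt (72 * x ^ 2 + 1) - 1)
        + 18 * x ^ 2 / Real.sqrt (72 * x ^ 2 + 1) := by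
  set s := √(72 * x ^ 2 + 1)
  have hs_pos : 0 < s := sqrt_pos.mpr (by positivity)
  have hs_sq : s ^ 2 = 1 + 4 * (18 * x ^ 2) := by rw [sq_sqrt (by positivity)]; ring
  have hE' : ∀ r, E r = (exp (2 * r) + s ^ 2 / exp (2 * r)) / 4 - 1/2 := fun r => by
    rw [hE, half_cosh_sub_one_add_mul_exp_neg, hs_sq]
  have hexp_rstar : exp (2 * rstar) = s := hrstar ▸ exp_two_mul_quarter_log (by positivity)
  have hE_rstar : E rstar = (s - 1) / 2 := by
    rw [hE', hexp_rstar, add_sq_div_eq_sub_sq_div_add hs_pos.ne']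
    ring
  refine ⟨fun r => ?_, fun r hr => ?_, ?_⟩
  · linarith [hE' r, two_mul_le_add_sq_div (exp_pos (2 * r)) s]
  · have hts : exp (2 * r) ≠ s := fun h =>
      hr (by linarith [exp_injective (h.trans hexp_rstar.symm)])
    linarith [hE' r, two_mul_lt_add_sq_div (exp_pos (2 * r)) hts]
  · rw [hE_rstar]
    field_simp
    linear_combination hs_sq

/-- For `x > 0`, the mean photon number
`E_x(r) = (1/2)(cosh(2r) − 1) + 18x²e^{−2r}` attains its global minimum at the unique
point `r* = (1/4)·log(72x² + 1)`, with minimum value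
`E_x(r*) = (1/2)·((36x² + 1)/√(72x² + 1) − 1) + 18x²/√(72x² + 1)`. -/
theorem cubic_phase_state_minimal_mean_photon_number
    (x : ℝ) (hx : 0 < x) (E : ℝ → ℝ)
    (hE : ∀ r, E r = (1/2) * (Real.cosh (2 * r) - 1) + 18 * x ^ 2 * Real.exp (-(2 * r)))
    (rstar : ℝ) (hrstar : rstar = (1/4) * Real.log (72 * x ^ 2 + 1)) :
    (∀ r, E rstar ≤ E r) ∧ (∀ r, r ≠ rstar → E rstar < E r) ∧
      E rstar = (1/2) * ((36 * x ^ 2 + 1) / Real.sqrt (72 * x ^ 2 + 1) - 1)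
        + 18 * x ^ 2 / Real.sqrt (72 * x ^ 2 + 1) :=
  cubic_phase_state_minimal_mean_photon_number_general x E hE rstar hrstar
end

section
/- Let a, b: ℕ × ℕ → ℂ satisfy: (i) for all n, a(n,n) and b(n,n) are nonnegative reals with Σₙ a(n,n) = 1 and Σₙ b(n,n) = 1; (ii) for all n, m, |a(n,m)|² ≤ a(n,n)·a(m,m) and |b(n,m)|² ≤ b(n,n)·b(m,m); (iii) the double family (n,m) ↦ a(n,m)·b(m,n) is absolutely summable. Then for every natural number M, |Σ_{n,m ∈ ℕ} a(n,m)·b(m,n) − Σ_{n+m ≤ 2M} a(n,m)·b(m,n)| ≤ 1 − Σ_{n+m ≤ 2M} a(n,n)·b(m,m) ≤ 1 − (Σ_{n ≤ M} a(n,n))·(Σ_{m ≤ M} b(m,m)). -/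
/-- Systematic-error bound for the destructive SWAP test with
saturating photon-number-resolving detectors:
`|Tr[ρσ] − Tr[SWAP_{2M} ρ⊗σ]| ≤ 1 − q_{2M} ≤ 1 − q_M^ρ · q_M^σ`,
expressed via Fock-basis matrix elements `a(n,m) = ⟨n|ρ|m⟩`, `b(n,m) = ⟨n|σ|m⟩`. -/
theorem swap_test_truncation_error_bound
    (a b : ℕ × ℕ → ℂ)
    (ha_diag : ∀ n : ℕ, a (n, n) = ((a (n, n)).re : ℂ) ∧ 0 ≤ (a (n, n)).re)
    (hb_diag : ∀ n : ℕ, b (n, n) = ((b (n, n)).re : ℂ) ∧ 0 ≤ (b (n, n)).re)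
    (ha_tr : ∑' n : ℕ, a (n, n) = 1)
    (hb_tr : ∑' n : ℕ, b (n, n) = 1)
    (ha_cs : ∀ n m : ℕ, ‖a (n, m)‖ ^ 2 ≤ (a (n, n)).re * (a (m, m)).re)
    (hb_cs : ∀ n m : ℕ, ‖b (n, m)‖ ^ 2 ≤ (b (n, n)).re * (b (m, m)).re)
    (hsum : Summable fun p : ℕ × ℕ => ‖a p * b p.swap‖)
    (M : ℕ) :
    ‖(∑' p : ℕ × ℕ, a p * b p.swap) -
        ∑ p ∈ (Finset.range (2 * M + 1) ×ˢ Finset.range (2 * M + 1)).filter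
            (fun p => p.1 + p.2 ≤ 2 * M), a p * b p.swap‖ ≤
      1 - ∑ p ∈ (Finset.range (2 * M + 1) ×ˢ Finset.range (2 * M + 1)).filter
            (fun p => p.1 + p.2 ≤ 2 * M), (a (p.1, p.1)).re * (b (p.2, p.2)).re ∧
    1 - ∑ p ∈ (Finset.range (2 * M + 1) ×ˢ Finset.range (2 * M + 1)).filter
            (fun p => p.1 + p.2 ≤ 2 * M), (a (p.1, p.1)).re * (b (p.2, p.2)).re ≤
      1 - (∑ n ∈ Finset.range (M + 1), (a (n, n)).re)
          * (∑ m ∈ Finset.range (M + 1), (b (m, m)).re) := by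
  classical
  set S : Finset (ℕ × ℕ) :=
    (Finset.range (2 * M + 1) ×ˢ Finset.range (2 * M + 1)).filter
      (fun p => p.1 + p.2 ≤ 2 * M) with hSdef
  set α : ℕ → ℝ := fun n => (a (n, n)).re with hα
  set β : ℕ → ℝ := fun n => (b (n, n)).re with hβ
  have hαnn : ∀ n, 0 ≤ α n := fun n => (ha_diag n).2
  have hβnn : ∀ n, 0 ≤ β n := fun n => (hb_diag n).2
  -- summability of the diagonals
  have hsa : Summable (fun n => a (n, n)) := by
    by_contra h
    rw [tsum_eq_zero_of_not_summable h] at ha_tr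
    exact one_ne_zero ha_tr.symm
  have hsb : Summable (fun n => b (n, n)) := by
    by_contra h
    rw [tsum_eq_zero_of_not_summable h] at hb_tr
    exact one_ne_zero hb_tr.symm
  have hαsum : Summable α := Complex.hasSum_re hsa.hasSum |>.summable
  have hβsum : Summable β := Complex.hasSum_re hsb.hasSum |>.summable
  have hα1 : HasSum α 1 := by
    have := Complex.hasSum_re hsa.hasSum
    rwa [ha_tr] at this
  have hβ1 : HasSum β 1 := by
    have := Complex.hasSum_re hsb.hasSum
    rwa [hb_tr] at this
  set x : ℕ × ℕ → ℝ := fun p => α p.1 * β p.2 with hxdef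
  have hxsum : Summable x := hαsum.mul_of_nonneg hβsum hαnn hβnn
  have hx1 : HasSum x 1 := by
    simpa using hα1.mul hβ1 hxsum
  have hxnn : ∀ p, 0 ≤ x p := fun p => mul_nonneg (hαnn _) (hβnn _)
  -- goal's big sum equals ∑ p ∈ S, x p
  have hq : ∑ p ∈ S, (a (p.1, p.1)).re * (b (p.2, p.2)).re = ∑ p ∈ S, x p := rfl
  constructor
  · -- first inequality
    set f : ℕ × ℕ → ℂ := fun p => a p * b p.swap with hfdef
    have hf : Summable f := hsum.of_norm
    have hdecomp := Summable.sum_add_tsum_compl (s := S) hf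
    have hdiff : (∑' p : ℕ × ℕ, f p) - ∑ p ∈ S, f p
        = ∑' p : ↥((↑S : Set (ℕ × ℕ))ᶜ), f p := by
      rw [← hdecomp]; ring
    rw [hdiff]
    -- swap-invariance of the complement
    have hSswap : ∀ p : ℕ × ℕ, p.swap ∈ S ↔ p ∈ S := by
      intro p
      simp only [hSdef, Finset.mem_filter, Finset.mem_product, Finset.mem_range,
        Prod.fst_swap, Prod.snd_swap]
      omega
    have hCswap : ∀ p : ℕ × ℕ, p.swap ∈ ((↑S : Set (ℕ × ℕ))ᶜ) ↔ p ∈ ((↑S : Set (ℕ × ℕ))ᶜ) := by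
      intro p
      simp [Set.mem_compl_iff, hSswap p]
    -- pointwise bound
    have hpt : ∀ p : ℕ × ℕ, ‖f p‖ ≤ (x p + x p.swap) / 2 := by
      rintro ⟨n, m⟩
      have hA := ha_cs n m
      have hB := hb_cs m n
      have hAn : (0:ℝ) ≤ ‖a (n, m)‖ := norm_nonneg _
      have hBn : (0:ℝ) ≤ ‖b (m, n)‖ := norm_nonneg _
      have h1 : 0 ≤ α n := hαnn n
      have h2 : 0 ≤ α m := hαnn m
      have h3 : 0 ≤ β n := hβnn n
      have h4 : 0 ≤ β m := hβnn m
      have hfe : ‖f (n, m)‖ = ‖a (n, m)‖ * ‖b (m, n)‖ := by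
        simp [hfdef, Prod.swap]
      rw [hfe]
      have hprod : (‖a (n, m)‖ * ‖b (m, n)‖) ^ 2 ≤ (α n * β m) * (α m * β n) := by
        have := mul_le_mul hA hB (sq_nonneg _) (mul_nonneg h1 h2)
        calc (‖a (n, m)‖ * ‖b (m, n)‖) ^ 2
            = ‖a (n, m)‖ ^ 2 * ‖b (m, n)‖ ^ 2 := by ring
          _ ≤ (α n * α m) * (β m * β n) := this
          _ = (α n * β m) * (α m * β n) := by ring
      have hxp : x (n, m) = α n * β m := rfl
      have hxq : x ((n, m) : ℕ × ℕ).swap = α m * β n := rfl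
      rw [hxp, hxq]
      have hs : (0:ℝ) ≤ (α n * β m + α m * β n) / 2 := by positivity
      have hsq : (‖a (n, m)‖ * ‖b (m, n)‖) ^ 2 ≤ ((α n * β m + α m * β n) / 2) ^ 2 := by
        nlinarith [sq_nonneg (α n * β m - α m * β n)]
      exact (pow_le_pow_iff_left₀ (mul_nonneg hAn hBn) hs (by norm_num)).mp hsq
    -- summabilities on the complement
    have hfC : Summable (fun p : ↥((↑S : Set (ℕ × ℕ))ᶜ) => ‖f p‖) := hsum.subtype _
    have hxswap : Summable (fun p : ℕ × ℕ => x p.swap) := by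
      have := (Equiv.prodComm ℕ ℕ).summable_iff.mpr hxsum
      simpa [Function.comp_def, Equiv.prodComm] using this
    have hgsum : Summable (fun p : ℕ × ℕ => (x p + x p.swap) / 2) :=
      (hxsum.add hxswap).div_const 2
    have step1 : ‖∑' p : ↥((↑S : Set (ℕ × ℕ))ᶜ), f p‖
        ≤ ∑' p : ↥((↑S : Set (ℕ × ℕ))ᶜ), ‖f p‖ := norm_tsum_le_tsum_norm hfC
    have step2 : (∑' p : ↥((↑S : Set (ℕ × ℕ))ᶜ), ‖f p‖)
        ≤ ∑' p : ↥((↑S : Set (ℕ × ℕ))ᶜ), (x (p : ℕ × ℕ) + x (p : ℕ × ℕ).swap) / 2 :=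
      Summable.tsum_le_tsum (fun p => hpt p) hfC (hgsum.subtype _)
    -- symmetrization: ∑' over complement of x ∘ swap equals that of x
    have hxswapC : Summable (fun p : ↥((↑S : Set (ℕ × ℕ))ᶜ) => x (p : ℕ × ℕ).swap) :=
      hxswap.subtype _
    have hxC : Summable (fun p : ↥((↑S : Set (ℕ × ℕ))ᶜ) => x p) := hxsum.subtype _
    let e : ↥((↑S : Set (ℕ × ℕ))ᶜ) ≃ ↥((↑S : Set (ℕ × ℕ))ᶜ) :=
      { toFun := fun q => ⟨(q : ℕ × ℕ).swap, (hCswap _).mpr q.2⟩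
        invFun := fun q => ⟨(q : ℕ × ℕ).swap, (hCswap _).mpr q.2⟩
        left_inv := fun q => by ext : 1; simp
        right_inv := fun q => by ext : 1; simp }
    have hsymm : (∑' p : ↥((↑S : Set (ℕ × ℕ))ᶜ), x (p : ℕ × ℕ).swap)
        = ∑' p : ↥((↑S : Set (ℕ × ℕ))ᶜ), x p := by
      have := e.tsum_eq (fun q : ↥((↑S : Set (ℕ × ℕ))ᶜ) => x q)
      simpa [e] using this
    have step3 : (∑' p : ↥((↑S : Set (ℕ × ℕ))ᶜ), (x (p : ℕ × ℕ) + x (p : ℕ × ℕ).swap) / 2)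
        = ∑' p : ↥((↑S : Set (ℕ × ℕ))ᶜ), x p := by
      rw [tsum_div_const, Summable.tsum_add hxC hxswapC, hsymm]
      ring
    have hxdecomp := Summable.sum_add_tsum_compl (s := S) hxsum
    have step4 : (∑' p : ↥((↑S : Set (ℕ × ℕ))ᶜ), x p) = 1 - ∑ p ∈ S, x p := by
      rw [hx1.tsum_eq] at hxdecomp
      linarith [hxdecomp]
    rw [hq]
    calc ‖∑' p : ↥((↑S : Set (ℕ × ℕ))ᶜ), f p‖
        ≤ ∑' p : ↥((↑S : Set (ℕ × ℕ))ᶜ), ‖f p‖ := step1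
      _ ≤ ∑' p : ↥((↑S : Set (ℕ × ℕ))ᶜ), (x (p : ℕ × ℕ) + x (p : ℕ × ℕ).swap) / 2 := step2
      _ = ∑' p : ↥((↑S : Set (ℕ × ℕ))ᶜ), x p := step3
      _ = 1 - ∑ p ∈ S, x p := step4
  · -- second inequality
    rw [hq]
    have hsubset : Finset.range (M + 1) ×ˢ Finset.range (M + 1) ⊆ S := by
      intro p hp
      simp only [Finset.mem_product, Finset.mem_range] at hp
      simp only [hSdef, Finset.mem_filter, Finset.mem_product, Finset.mem_range]
      omega
    have hps : (∑ n ∈ Finset.range (M + 1), α n) * (∑ m ∈ Finset.range (M + 1), β m)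
        = ∑ p ∈ Finset.range (M + 1) ×ˢ Finset.range (M + 1), x p := by
      rw [Finset.sum_mul_sum, Finset.sum_product]
    have : (∑ n ∈ Finset.range (M + 1), α n) * (∑ m ∈ Finset.range (M + 1), β m)
        ≤ ∑ p ∈ S, x p := by
      rw [hps]
      exact Finset.sum_le_sum_of_subset_of_nonneg hsubset (fun p _ _ => hxnn p)
    linarith
end
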